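/- arXiv:2010.15212 — 4 statements merged into one kernel-verified Lean document; each statement's English description precedes it below -/
import Mathlib

section
/- The Marshall–Olkin bivariate exponential distribution with parameters α¹,α²,α³ > 0 does not admit a density with respect to Lebesgue measure on ℝ²: its law has a nonzero singular component supported on the diagonal {(x,x) : x ≥ 0}, with singular part having total mass α³/(α¹+α²+α³). -/
/-!
The survival function determines the law `ν` of `(Z1, Z2)` on the π-system of orthants
`(s, ∞) × (t, ∞)`. Computing orthant masses shows that `ν = ξ + f • Leb`, where `ξ` is `α³/μ` times
the image of `Exp μ` under `x ↦ (x, x)` and `f` is the density of the absolutely continuous part.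
Since `ξ` lives on the Lebesgue-null diagonal, uniqueness of the Lebesgue decomposition identifies
`ξ` as the singular part of `ν`.
-/

open MeasureTheory Real Set
open scoped ENNReal

lemma lintegral_Ioi_mul_exp_neg_mul {r : ℝ} (hr : 0 < r) (c : ℝ) :
    ∫⁻ x in Ioi c, ENNReal.ofReal (r * exp (-r * x)) = ENNReal.ofReal (exp (-r * c)) := by
  have hr' : -r < 0 := neg_lt_zero.2 hr
  rw [← ofReal_integral_eq_lintegral_ofReal ((integrableOn_exp_mul_Ioi hr' c).const_mul r)
    (ae_of_all _ fun x => by positivity), integral_const_mul, integral_exp_mul_Ioi hr']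
  congr 1
  field_simp

lemma lintegral_Ioc_mul_exp_neg_mul {r : ℝ} (hr : 0 < r) {c d : ℝ} (hcd : c ≤ d) :
    ∫⁻ x in Ioc c d, ENNReal.ofReal (r * exp (-r * x))
      = ENNReal.ofReal (exp (-r * c) - exp (-r * d)) := by
  have hsplit := lintegral_union (μ := volume) (f := fun x => ENNReal.ofReal (r * exp (-r * x)))
    measurableSet_Ioi (Ioc_disjoint_Ioi (a := c) (le_refl d))
  rw [Ioc_union_Ioi_eq_Ioi hcd, lintegral_Ioi_mul_exp_neg_mul hr,
    lintegral_Ioi_mul_exp_neg_mul hr] at hsplit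
  rw [ENNReal.ofReal_sub _ (exp_nonneg _), hsplit,
    ENNReal.add_sub_cancel_right ENNReal.ofReal_ne_top]

lemma exp_neg_mul_le_exp_neg_mul {r : ℝ} (hr : 0 ≤ r) {x y : ℝ} (hxy : x ≤ y) :
    exp (-r * y) ≤ exp (-r * x) :=
  exp_le_exp.2 (mul_le_mul_of_nonpos_left hxy (neg_nonpos.2 hr))

lemma MeasureTheory.setLIntegral_prod_comp_swap {α β : Type*} [MeasurableSpace α]
    [MeasurableSpace β] {μ : Measure α} {ν : Measure β} [SFinite μ] [SFinite ν] (f : β × α → ℝ≥0∞)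
    (s : Set α) (t : Set β) :
    ∫⁻ z in s ×ˢ t, f z.swap ∂μ.prod ν = ∫⁻ z in t ×ˢ s, f z ∂ν.prod μ := by
  rw [← Measure.prod_restrict, ← Measure.prod_restrict, lintegral_prod_swap]

lemma MeasureTheory.Measure.prod_diagonal_eq_zero {α : Type*} [MeasurableSpace α] [MeasurableEq α]
    (μ ν : Measure α) [SFinite ν] [NullSingletonClass ν] : μ.prod ν (diagonal α) = 0 := by
  have hsection : ∀ x : α, Prod.mk x ⁻¹' diagonal α = {x} := fun x => by ext; simp [eq_comm]
  simp [Measure.prod_apply measurableSet_diagonal, hsection]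

lemma MeasureTheory.Measure.ext_of_Ioi_prod_Ioi {μ ν : Measure (ℝ × ℝ)} [IsFiniteMeasure μ]
    (h : ∀ a b : ℝ, μ (Ioi a ×ˢ Ioi b) = ν (Ioi a ×ˢ Ioi b)) : μ = ν := by
  have hcover : ∀ z : ℝ, ∃ n : ℕ, z ∈ Ioi (-(n : ℝ)) := fun z =>
    (exists_nat_gt (-z)).imp fun n hn => by rw [mem_Ioi]; linarith
  have hspan : IsCountablySpanning (range (Ioi : ℝ → Set ℝ)) :=
    ⟨fun n : ℕ => Ioi (-(n : ℝ)), fun n => mem_range_self _,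
      eq_univ_of_forall fun z => mem_iUnion.2 (hcover z)⟩
  have hgen : (inferInstance : MeasurableSpace (ℝ × ℝ))
      = MeasurableSpace.generateFrom (image2 (· ×ˢ ·) (range Ioi) (range Ioi)) := by
    rw [← generateFrom_prod_eq hspan hspan, ← borel_eq_generateFrom_Ioi,
      ← BorelSpace.measurable_eq]
  refine ext_of_generateFrom_of_iUnion _ (fun n : ℕ => Ioi (-(n : ℝ)) ×ˢ Ioi (-(n : ℝ))) hgen
    (isPiSystem_Ioi.prod isPiSystem_Ioi) ?_
    (fun _ => mem_image2_of_mem (mem_range_self _) (mem_range_self _))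
    (fun _ => measure_ne_top _ _) ?_
  · refine eq_univ_of_forall fun z => mem_iUnion.2 ?_
    obtain ⟨m, hm⟩ := hcover z.1
    obtain ⟨n, hn⟩ := hcover z.2
    refine ⟨max m n, mem_of_mem_of_subset (mk_mem_prod hm hn) (Set.prod_mono ?_ ?_)⟩ <;>
      exact Ioi_subset_Ioi (by simp)
  · rintro _ ⟨_, ⟨a, rfl⟩, _, ⟨b, rfl⟩, rfl⟩
    exact h a b

lemma MeasureTheory.Measure.ext_of_Ioi_prod_Ioi_of_nonneg {μ ν : Measure (ℝ × ℝ)}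
    [IsFiniteMeasure μ] (hμ : μ (Ioi 0 ×ˢ Ioi 0)ᶜ = 0) (hν : ν (Ioi 0 ×ˢ Ioi 0)ᶜ = 0)
    (h : ∀ s t : ℝ, 0 ≤ s → 0 ≤ t → μ (Ioi s ×ˢ Ioi t) = ν (Ioi s ×ˢ Ioi t)) : μ = ν := by
  have hclamp : ∀ a b : ℝ, Ioi a ×ˢ Ioi b ∩ Ioi 0 ×ˢ Ioi 0 = Ioi (max a 0) ×ˢ Ioi (max b 0) :=
    fun a b => by rw [prod_inter_prod, Ioi_inter_Ioi, Ioi_inter_Ioi]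
  refine Measure.ext_of_Ioi_prod_Ioi fun a b => ?_
  rw [← measure_inter_conull hμ, ← measure_inter_conull hν, hclamp]
  exact h _ _ (le_max_right a 0) (le_max_right b 0)

noncomputable def orderedExpDensity (p q : ℝ) (z : ℝ × ℝ) : ℝ≥0∞ :=
  if 0 < z.1 ∧ z.1 < z.2 then
    ENNReal.ofReal (p * exp (-p * z.1)) * ENNReal.ofReal (q * exp (-q * z.2))
  else 0

lemma measurable_orderedExpDensity (p q : ℝ) : Measurable (orderedExpDensity p q) :=
  Measurable.ite ((measurableSet_lt measurable_const measurable_fst).inter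
    (measurableSet_lt measurable_fst measurable_snd)) (by fun_prop) measurable_const

lemma orderedExpDensity_eq_zero {p q : ℝ} {z : ℝ × ℝ} (hz : z ∉ Ioi 0 ×ˢ Ioi 0) :
    orderedExpDensity p q z = 0 :=
  if_neg fun h => hz ⟨h.1, h.1.trans h.2⟩

noncomputable def orderedExpTail (p q s t : ℝ) : ℝ :=
  (exp (-p * s) - exp (-p * max s t)) * exp (-q * t) + p / (p + q) * exp (-(p + q) * max s t)

lemma orderedExpTail_nonneg {p q : ℝ} (hp : 0 < p) (hq : 0 < q) (s t : ℝ) :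
    0 ≤ orderedExpTail p q s t :=
  add_nonneg (mul_nonneg (sub_nonneg.2 (exp_neg_mul_le_exp_neg_mul hp.le (le_max_left s t)))
    (exp_nonneg _)) (by positivity)

lemma lintegral_Ioi_mul_exp_mul_exp_max {p q : ℝ} (hp : 0 < p) (hq : 0 < q) (s t : ℝ) :
    ∫⁻ x in Ioi s, ENNReal.ofReal (p * exp (-p * x)) * ENNReal.ofReal (exp (-q * max t x))
      = ENNReal.ofReal (orderedExpTail p q s t) := by
  set M := max s t
  have hsM : s ≤ M := le_max_left s t
  have hgap : 0 ≤ exp (-p * s) - exp (-p * M) :=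
    sub_nonneg.2 (exp_neg_mul_le_exp_neg_mul hp.le hsM)
  rw [← Ioc_union_Ioi_eq_Ioi hsM, lintegral_union measurableSet_Ioi (Ioc_disjoint_Ioi le_rfl)]
  have below : ∫⁻ x in Ioc s M,
      ENNReal.ofReal (p * exp (-p * x)) * ENNReal.ofReal (exp (-q * max t x))
        = ENNReal.ofReal ((exp (-p * s) - exp (-p * M)) * exp (-q * t)) := by
    have hmax : ∀ x ∈ Ioc s M,
        ENNReal.ofReal (p * exp (-p * x)) * ENNReal.ofReal (exp (-q * max t x))
          = ENNReal.ofReal (p * exp (-p * x)) * ENNReal.ofReal (exp (-q * t)) := fun x hx => by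
      rw [max_eq_left ((le_max_iff.1 hx.2).resolve_left (not_le.2 hx.1))]
    rw [setLIntegral_congr_fun measurableSet_Ioc hmax, lintegral_mul_const _ (by fun_prop),
      lintegral_Ioc_mul_exp_neg_mul hp hsM, ← ENNReal.ofReal_mul hgap]
  have above : ∫⁻ x in Ioi M,
      ENNReal.ofReal (p * exp (-p * x)) * ENNReal.ofReal (exp (-q * max t x))
        = ENNReal.ofReal (p / (p + q) * exp (-(p + q) * M)) := by
    have hmax : ∀ x ∈ Ioi M,
        ENNReal.ofReal (p * exp (-p * x)) * ENNReal.ofReal (exp (-q * max t x))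
          = ENNReal.ofReal (p / (p + q)) * ENNReal.ofReal ((p + q) * exp (-(p + q) * x)) :=
      fun x hx => by
        rw [max_eq_right ((le_max_right s t).trans hx.le), ← ENNReal.ofReal_mul (by positivity),
          ← ENNReal.ofReal_mul (by positivity), show -(p + q) * x = -p * x + -q * x by ring,
          exp_add]
        congr 1
        field_simp
    rw [setLIntegral_congr_fun measurableSet_Ioi hmax, lintegral_const_mul _ (by fun_prop),
      lintegral_Ioi_mul_exp_neg_mul (by positivity), ← ENNReal.ofReal_mul (by positivity)]
  rw [below, above, ← ENNReal.ofReal_add (mul_nonneg hgap (exp_nonneg _)) (by positivity)]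
  rfl

lemma setLIntegral_orderedExpDensity {p q s : ℝ} (hp : 0 < p) (hq : 0 < q) (hs : 0 ≤ s)
    (t : ℝ) :
    ∫⁻ z in Ioi s ×ˢ Ioi t, orderedExpDensity p q z
      = ENNReal.ofReal (orderedExpTail p q s t) := by
  rw [Measure.volume_eq_prod, ← Measure.prod_restrict,
    lintegral_prod _ (measurable_orderedExpDensity p q).aemeasurable,
    ← lintegral_Ioi_mul_exp_mul_exp_max hp hq s t]
  refine setLIntegral_congr_fun measurableSet_Ioi fun x hx => ?_
  have hx0 : 0 < x := hs.trans_lt hx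
  have hsection : (fun y => orderedExpDensity p q (x, y)) = (Ioi x).indicator
      fun y => ENNReal.ofReal (p * exp (-p * x)) * ENNReal.ofReal (q * exp (-q * y)) := by
    ext y
    simp [orderedExpDensity, indicator, hx0]
  rw [hsection, lintegral_indicator measurableSet_Ioi,
    Measure.restrict_restrict measurableSet_Ioi, Ioi_inter_Ioi, lintegral_const_mul _ (by fun_prop),
    lintegral_Ioi_mul_exp_neg_mul hq, max_comm]

namespace MarshallOlkin

variable (a1 a2 a3 : ℝ)

/- With `μ = α¹ + α² + α³`, `diagonalMeasure` and `density • volume` are the paper's singular and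
absolutely continuous parts multiplied by their weights `α³/μ` and `(α¹ + α²)/μ`. -/

noncomputable def diagonalMeasure : Measure (ℝ × ℝ) :=
  ENNReal.ofReal (a3 / (a1 + a2 + a3)) •
    ((volume.restrict (Ioi 0)).withDensity fun x =>
      ENNReal.ofReal ((a1 + a2 + a3) * exp (-(a1 + a2 + a3) * x))).map fun x => (x, x)

noncomputable def density (z : ℝ × ℝ) : ℝ≥0∞ :=
  orderedExpDensity a1 (a2 + a3) z + orderedExpDensity a2 (a1 + a3) z.swap

noncomputable def law : Measure (ℝ × ℝ) :=
  diagonalMeasure a1 a2 a3 + volume.withDensity (density a1 a2 a3)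

lemma diagonalMeasure_apply {T : Set (ℝ × ℝ)} (hT : MeasurableSet T) :
    diagonalMeasure a1 a2 a3 T = ENNReal.ofReal (a3 / (a1 + a2 + a3)) *
      ∫⁻ x in (fun x => (x, x)) ⁻¹' T ∩ Ioi 0,
        ENNReal.ofReal ((a1 + a2 + a3) * exp (-(a1 + a2 + a3) * x)) := by
  have hdiag : Measurable fun x : ℝ => (x, x) := measurable_id.prodMk measurable_id
  rw [diagonalMeasure, Measure.smul_apply, Measure.map_apply hdiag hT,
    withDensity_apply _ (hdiag hT), Measure.restrict_restrict (hdiag hT), smul_eq_mul]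

lemma diagonalMeasure_eq_zero {T : Set (ℝ × ℝ)} (hT : MeasurableSet T)
    (hdiag : ∀ x : ℝ, 0 < x → (x, x) ∉ T) : diagonalMeasure a1 a2 a3 T = 0 := by
  have hempty : (fun x => (x, x)) ⁻¹' T ∩ Ioi 0 = ∅ :=
    eq_empty_of_forall_notMem fun x hx => hdiag x hx.2 hx.1
  rw [diagonalMeasure_apply a1 a2 a3 hT, hempty, Measure.restrict_empty, lintegral_zero_measure,
    mul_zero]

lemma diagonalMeasure_compl_diagonal_nonneg :
    diagonalMeasure a1 a2 a3 {p : ℝ × ℝ | p.1 = p.2 ∧ 0 ≤ p.1}ᶜ = 0 :=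
  diagonalMeasure_eq_zero a1 a2 a3
    ((measurableSet_eq_fun measurable_fst measurable_snd).inter
      (measurableSet_le measurable_const measurable_fst)).compl
    fun _ hx h => h ⟨rfl, hx.le⟩

lemma mutuallySingular_diagonalMeasure : diagonalMeasure a1 a2 a3 ⟂ₘ volume := by
  refine ⟨(diagonal ℝ)ᶜ, measurableSet_diagonal.compl,
    diagonalMeasure_eq_zero a1 a2 a3 measurableSet_diagonal.compl fun _ _ h => h rfl, ?_⟩
  rw [compl_compl, Measure.volume_eq_prod]
  exact Measure.prod_diagonal_eq_zero _ _

lemma measurable_density : Measurable (density a1 a2 a3) :=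
  (measurable_orderedExpDensity _ _).add ((measurable_orderedExpDensity _ _).comp measurable_swap)

lemma density_eq_zero {z : ℝ × ℝ} (hz : z ∉ Ioi 0 ×ˢ Ioi 0) : density a1 a2 a3 z = 0 := by
  have hz' : z.swap ∉ Ioi 0 ×ˢ Ioi 0 := fun h => hz ⟨h.2, h.1⟩
  rw [density, orderedExpDensity_eq_zero hz, orderedExpDensity_eq_zero hz', add_zero]

lemma law_compl_quadrant : law a1 a2 a3 (Ioi 0 ×ˢ Ioi 0)ᶜ = 0 := by
  have hQ : MeasurableSet (Ioi (0 : ℝ) ×ˢ Ioi (0 : ℝ)) := measurableSet_Ioi.prod measurableSet_Ioi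
  rw [law, Measure.add_apply, diagonalMeasure_eq_zero a1 a2 a3 hQ.compl fun _ hx h => h ⟨hx, hx⟩,
    withDensity_apply _ hQ.compl,
    setLIntegral_congr_fun hQ.compl fun _ hz => density_eq_zero a1 a2 a3 hz, lintegral_zero,
    add_zero]

variable {a1 a2 a3}

lemma diagonalMeasure_Ioi_prod_Ioi (hm : 0 < a1 + a2 + a3) {s t : ℝ} (hs : 0 ≤ s) :
    diagonalMeasure a1 a2 a3 (Ioi s ×ˢ Ioi t)
      = ENNReal.ofReal (a3 / (a1 + a2 + a3) * exp (-(a1 + a2 + a3) * max s t)) := by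
  have hpre : (fun x => (x, x)) ⁻¹' (Ioi s ×ˢ Ioi t) ∩ Ioi 0 = Ioi (max s t) := by
    rw [mk_preimage_prod, preimage_id', preimage_id', Ioi_inter_Ioi, Ioi_inter_Ioi,
      max_eq_left (le_max_of_le_left hs)]
  rw [diagonalMeasure_apply a1 a2 a3 (measurableSet_Ioi.prod measurableSet_Ioi), hpre,
    lintegral_Ioi_mul_exp_neg_mul hm, ← ENNReal.ofReal_mul' (exp_nonneg _)]

lemma diagonalMeasure_univ (hm : 0 < a1 + a2 + a3) :
    diagonalMeasure a1 a2 a3 univ = ENNReal.ofReal (a3 / (a1 + a2 + a3)) := by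
  rw [diagonalMeasure_apply a1 a2 a3 MeasurableSet.univ, preimage_univ, univ_inter,
    lintegral_Ioi_mul_exp_neg_mul hm, mul_zero, exp_zero, ENNReal.ofReal_one, mul_one]

lemma withDensity_density_Ioi_prod_Ioi (ha1 : 0 < a1) (ha2 : 0 < a2) (ha3 : 0 < a3)
    {s t : ℝ} (hs : 0 ≤ s) (ht : 0 ≤ t) :
    volume.withDensity (density a1 a2 a3) (Ioi s ×ˢ Ioi t)
      = ENNReal.ofReal (orderedExpTail a1 (a2 + a3) s t)
        + ENNReal.ofReal (orderedExpTail a2 (a1 + a3) t s) := by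
  have hswapped : ∫⁻ z in Ioi s ×ˢ Ioi t, orderedExpDensity a2 (a1 + a3) z.swap
      = ENNReal.ofReal (orderedExpTail a2 (a1 + a3) t s) := by
    rw [Measure.volume_eq_prod, setLIntegral_prod_comp_swap, ← Measure.volume_eq_prod,
      setLIntegral_orderedExpDensity ha2 (by positivity) ht]
  rw [withDensity_apply _ (measurableSet_Ioi.prod measurableSet_Ioi)]
  simp only [density]
  rw [lintegral_add_left (measurable_orderedExpDensity _ _),
    setLIntegral_orderedExpDensity ha1 (by positivity) hs, hswapped]

lemma diagonal_add_orderedExpTail_add_orderedExpTail (hm : a1 + a2 + a3 ≠ 0) (s t : ℝ) :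
    a3 / (a1 + a2 + a3) * exp (-(a1 + a2 + a3) * max s t) + orderedExpTail a1 (a2 + a3) s t
        + orderedExpTail a2 (a1 + a3) t s
      = exp (-(a1 * s) - a2 * t - a3 * max s t) := by
  simp only [orderedExpTail, show a1 + (a2 + a3) = a1 + a2 + a3 by ring,
    show a2 + (a1 + a3) = a1 + a2 + a3 by ring, max_comm t s]
  rcases le_total s t with h | h
  · have hsplit : exp (-(a1 + a2 + a3) * t) = exp (-a1 * t) * exp (-(a2 + a3) * t) := by
      rw [← exp_add]; ring_nf
    have hrhs : exp (-(a1 * s) - a2 * t - a3 * t) = exp (-a1 * s) * exp (-(a2 + a3) * t) := by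
      rw [← exp_add]; ring_nf
    rw [max_eq_right h, sub_self, zero_mul, hsplit, hrhs]
    field_simp
    ring
  · have hsplit : exp (-(a1 + a2 + a3) * s) = exp (-a2 * s) * exp (-(a1 + a3) * s) := by
      rw [← exp_add]; ring_nf
    have hrhs : exp (-(a1 * s) - a2 * t - a3 * s) = exp (-a2 * t) * exp (-(a1 + a3) * s) := by
      rw [← exp_add]; ring_nf
    rw [max_eq_left h, sub_self, zero_mul, hsplit, hrhs]
    field_simp
    ring

lemma law_Ioi_prod_Ioi (ha1 : 0 < a1) (ha2 : 0 < a2) (ha3 : 0 < a3)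
    {s t : ℝ} (hs : 0 ≤ s) (ht : 0 ≤ t) :
    law a1 a2 a3 (Ioi s ×ˢ Ioi t) = ENNReal.ofReal (exp (-(a1 * s) - a2 * t - a3 * max s t)) := by
  have hdiag : 0 ≤ a3 / (a1 + a2 + a3) * exp (-(a1 + a2 + a3) * max s t) := by positivity
  have htail1 := orderedExpTail_nonneg ha1 (add_pos ha2 ha3) s t
  have htail2 := orderedExpTail_nonneg ha2 (add_pos ha1 ha3) t s
  rw [law, Measure.add_apply, diagonalMeasure_Ioi_prod_Ioi (by positivity) hs,
    withDensity_density_Ioi_prod_Ioi ha1 ha2 ha3 hs ht, ← add_assoc,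
    ← ENNReal.ofReal_add hdiag htail1, ← ENNReal.ofReal_add (add_nonneg hdiag htail1) htail2,
    diagonal_add_orderedExpTail_add_orderedExpTail (by positivity)]

end MarshallOlkin

theorem bve_no_density_general {Ω : Type*} [MeasurableSpace Ω] (μ : Measure Ω) [IsProbabilityMeasure μ]
    (Z1 Z2 : Ω → ℝ) (hZ1 : Measurable Z1) (hZ2 : Measurable Z2)
    (a1 a2 a3 : ℝ) (ha1 : 0 < a1) (ha2 : 0 < a2) (ha3 : 0 < a3)
    (hsurv : ∀ s t : ℝ, 0 ≤ s → 0 ≤ t →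
      μ {ω | s < Z1 ω ∧ t < Z2 ω} =
        ENNReal.ofReal (Real.exp (-(a1 * s) - a2 * t - a3 * max s t))) :
    ¬ (Measure.map (fun ω => (Z1 ω, Z2 ω)) μ) ≪ (volume : Measure (ℝ × ℝ)) ∧
    (Measure.map (fun ω => (Z1 ω, Z2 ω)) μ).singularPart (volume : Measure (ℝ × ℝ)) Set.univ
      = ENNReal.ofReal (a3 / (a1 + a2 + a3)) ∧
    (Measure.map (fun ω => (Z1 ω, Z2 ω)) μ).singularPart (volume : Measure (ℝ × ℝ))
      {p : ℝ × ℝ | p.1 = p.2 ∧ 0 ≤ p.1}ᶜ = 0 := by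
  have hZ : Measurable fun ω => (Z1 ω, Z2 ω) := hZ1.prodMk hZ2
  set ν := Measure.map (fun ω => (Z1 ω, Z2 ω)) μ
  have : IsProbabilityMeasure ν := Measure.isProbabilityMeasure_map hZ.aemeasurable
  have hν_orthant : ∀ s t : ℝ, ν (Ioi s ×ˢ Ioi t) = μ {ω | s < Z1 ω ∧ t < Z2 ω} := fun s t =>
    Measure.map_apply hZ (measurableSet_Ioi.prod measurableSet_Ioi)
  have hν_quadrant : ν (Ioi 0 ×ˢ Ioi 0)ᶜ = 0 := by
    rw [prob_compl_eq_zero_iff (measurableSet_Ioi.prod measurableSet_Ioi), hν_orthant,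
      hsurv 0 0 le_rfl le_rfl]
    simp
  have hν : ν = MarshallOlkin.law a1 a2 a3 :=
    Measure.ext_of_Ioi_prod_Ioi_of_nonneg hν_quadrant (MarshallOlkin.law_compl_quadrant a1 a2 a3)
      fun s t hs ht => by
        rw [hν_orthant, hsurv s t hs ht, MarshallOlkin.law_Ioi_prod_Ioi ha1 ha2 ha3 hs ht]
  have hsingular : ν.singularPart volume = MarshallOlkin.diagonalMeasure a1 a2 a3 :=
    (Measure.eq_singularPart (MarshallOlkin.measurable_density a1 a2 a3)
      (MarshallOlkin.mutuallySingular_diagonalMeasure a1 a2 a3) hν).symm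
  have hmass := MarshallOlkin.diagonalMeasure_univ (show 0 < a1 + a2 + a3 by positivity)
  refine ⟨fun hac => ?_, hsingular ▸ hmass,
    hsingular ▸ MarshallOlkin.diagonalMeasure_compl_diagonal_nonneg a1 a2 a3⟩
  rw [← hsingular, Measure.singularPart_eq_zero_of_ac hac, Measure.coe_zero, Pi.zero_apply,
    eq_comm, ENNReal.ofReal_eq_zero] at hmass
  exact hmass.not_gt (by positivity)

/-- The Marshall–Olkin BVE has no density with respect to Lebesgue measure on `ℝ²`:
its law is not absolutely continuous, the singular part (w.r.t. Lebesgue measure) has total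
mass `α³/(α¹+α²+α³)` and is carried by the diagonal `{(x,x) : x ≥ 0}`. -/
theorem bve_no_density {Ω : Type*} [MeasurableSpace Ω] (μ : Measure Ω) [IsProbabilityMeasure μ]
    (Z1 Z2 : Ω → ℝ) (hZ1 : Measurable Z1) (hZ2 : Measurable Z2)
    (hpos1 : ∀ᵐ ω ∂μ, 0 ≤ Z1 ω) (hpos2 : ∀ᵐ ω ∂μ, 0 ≤ Z2 ω)
    (a1 a2 a3 : ℝ) (ha1 : 0 < a1) (ha2 : 0 < a2) (ha3 : 0 < a3)
    (hsurv : ∀ s t : ℝ, 0 ≤ s → 0 ≤ t →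
      μ {ω | s < Z1 ω ∧ t < Z2 ω} =
        ENNReal.ofReal (Real.exp (-(a1 * s) - a2 * t - a3 * max s t))) :
    ¬ (Measure.map (fun ω => (Z1 ω, Z2 ω)) μ) ≪ (volume : Measure (ℝ × ℝ)) ∧
    (Measure.map (fun ω => (Z1 ω, Z2 ω)) μ).singularPart (volume : Measure (ℝ × ℝ)) Set.univ
      = ENNReal.ofReal (a3 / (a1 + a2 + a3)) ∧
    (Measure.map (fun ω => (Z1 ω, Z2 ω)) μ).singularPart (volume : Measure (ℝ × ℝ))
      {p : ℝ × ℝ | p.1 = p.2 ∧ 0 ≤ p.1}ᶜ = 0 :=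
  bve_no_density_general μ Z1 Z2 hZ1 hZ2 a1 a2 a3 ha1 ha2 ha3 hsurv
end

section
/- Key lemma of progressive enlargement: if 𝒢_t = ℱ_t ∨ σ(τ∧t), then for any 𝒢_t-measurable random variable Y there exists an ℱ_t-measurable random variable Z such that 1_{τ>t}·Y = 1_{τ>t}·Z almost surely. -/
open MeasureTheory Set

/-! On `{τ > t}` the map `τ ∧ t` is the constant `t`, so the σ-algebra it generates is trivial
there: traced on `{τ > t}`, `𝒢_t` coincides with `ℱ_t`. A `𝒢_t`-measurable `Y` restricted to
`{τ > t}` is therefore measurable for the trace of `ℱ_t`, and the Doob–Dynkin factorization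
through the inclusion `{τ > t} → (Ω, ℱ_t)` produces the `ℱ_t`-measurable `Z`. -/

namespace MeasurableSpace

theorem comap_subtype_val_sup_comap_of_eqOn_const {Ω β : Type*} {m : MeasurableSpace Ω}
    {mβ : MeasurableSpace β} {g : Ω → β} {T : Set Ω} {c : β} (hg : EqOn g (fun _ ↦ c) T) :
    (m ⊔ mβ.comap g).comap ((↑) : T → Ω) = m.comap (↑) := by
  have hgT : g ∘ ((↑) : T → Ω) = fun _ ↦ c := funext fun x ↦ hg x.2
  rw [comap_sup, comap_comp, hgT, comap_const, sup_bot_eq]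

end MeasurableSpace

theorem Measurable.exists_measurable_eqOn_of_sup_comap_eqOn_const {Ω β E : Type*} {m : MeasurableSpace Ω}
    {mβ : MeasurableSpace β} [MeasurableSpace E] [StandardBorelSpace E] [Nonempty E]
    {g : Ω → β} {T : Set Ω} {c : β} (hg : EqOn g (fun _ ↦ c) T) {Y : Ω → E}
    (hY : Measurable[m ⊔ mβ.comap g] Y) :
    ∃ Z : Ω → E, Measurable[m] Z ∧ EqOn Y Z T := by
  have hYT : Measurable[m.comap ((↑) : T → Ω)] (Y ∘ (↑)) := by
    rw [← MeasurableSpace.comap_subtype_val_sup_comap_of_eqOn_const (m := m) hg]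
    exact hY.comp (comap_measurable _)
  obtain ⟨Z, hZ, hYZ⟩ := hYT.exists_eq_measurable_comp
  exact ⟨Z, hZ, fun ω hω ↦ congrFun hYZ ⟨ω, hω⟩⟩

theorem progressive_enlargement_reduction_general {Ω : Type*} {m0 : MeasurableSpace Ω}
    (μ : Measure Ω)
    (F : Filtration ℝ m0) (τ : Ω → ℝ)
    (G : ℝ → MeasurableSpace Ω)
    (hG : ∀ t, G t = F t ⊔ MeasurableSpace.comap (fun ω => min (τ ω) t) inferInstance)
    (t : ℝ) (Y : Ω → ℝ) (hY : Measurable[G t] Y) :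
    ∃ Z : Ω → ℝ, Measurable[F t] Z ∧
      ∀ᵐ ω ∂μ, Set.indicator {ω' | t < τ ω'} Y ω = Set.indicator {ω' | t < τ ω'} Z ω := by
  have hmin : EqOn (fun ω ↦ min (τ ω) t) (fun _ ↦ t) {ω' | t < τ ω'} :=
    fun _ hω ↦ min_eq_right (le_of_lt hω)
  rw [hG t] at hY
  obtain ⟨Z, hZ, hYZ⟩ := hY.exists_measurable_eqOn_of_sup_comap_eqOn_const hmin
  exact ⟨Z, hZ, ae_of_all μ (congrFun (indicator_congr hYZ))⟩

/-- Key lemma of progressive enlargement: if `𝒢_t = ℱ_t ∨ σ(τ ∧ t)`, then every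
`𝒢_t`-measurable random variable `Y` agrees, on `{τ > t}`, with some `ℱ_t`-measurable
random variable `Z` (almost surely). -/
theorem progressive_enlargement_reduction {Ω : Type*} {m0 : MeasurableSpace Ω}
    (μ : Measure Ω) [IsProbabilityMeasure μ]
    (F : Filtration ℝ m0) (τ : Ω → ℝ) (hτ : Measurable τ)
    (G : ℝ → MeasurableSpace Ω)
    (hG : ∀ t, G t = F t ⊔ MeasurableSpace.comap (fun ω => min (τ ω) t) inferInstance)
    (t : ℝ) (Y : Ω → ℝ) (hY : Measurable[G t] Y) :
    ∃ Z : Ω → ℝ, Measurable[F t] Z ∧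
      ∀ᵐ ω ∂μ, Set.indicator {ω' | t < τ ω'} Y ω = Set.indicator {ω' | t < τ ω'} Z ω :=
  progressive_enlargement_reduction_general μ F τ G hG t Y hY
end

section
/- Let τ be a 𝔾 stopping time, λ a nonnegative bounded 𝔾-adapted process such that M_t = 1_{t≥τ} − ∫₀^{t∧τ} λ_s ds is a 𝔾-martingale. Then the process L_t = 1_{τ>t}·exp(∫₀^t λ_s ds) is a 𝔾-martingale, and satisfies dL_t = −exp(∫₀^t λ_s ds) dM_t. -/
open MeasureTheory Real Set Filter Topology
open scoped NNReal

/-!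
Pathwise, `L_t = 1_{t<τ} e^{Λ_t}` with `Λ_t = ∫₀^t λ` solves `dL = -L_{t-} dM`. In integrated form
this is the second claim; it is the fundamental theorem of calculus for the Lipschitz function
`e^Λ`. For the martingale property compare `L_j - L_i` with the discrete stochastic integral
`-∑ₖ L_{p_k} (M_{p_{k+1}} - M_{p_k})` over a uniform partition of `[i, j]`. Every summand has
zero conditional expectation given `𝒢_i`, and since `Λ` is Lipschitz the pathwise error of each
Euler step is of second order in the mesh, except at the single step containing `τ`, where it is
of first order. The error is therefore `O(1/n)` uniformly in `ω`, which forces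
`E[L_j - L_i | 𝒢_i] = 0`.
-/

section Exp

lemma exp_sub_exp_le_mul_sub (x y : ℝ) : exp y - exp x ≤ exp y * (y - x) := by
  nlinarith [add_one_le_exp (x - y), exp_pos y, show exp y * exp (x - y) = exp x by
    rw [← exp_add]; ring_nf]

lemma abs_exp_sub_exp_le (x y : ℝ) : |exp y - exp x| ≤ exp (max x y) * |y - x| := by
  wlog hxy : x ≤ y generalizing x y
  · rw [abs_sub_comm, abs_sub_comm y, max_comm]
    exact this y x (le_of_not_ge hxy)
  rw [max_eq_right hxy, abs_of_nonneg (sub_nonneg.2 (exp_le_exp.2 hxy)),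
    abs_of_nonneg (sub_nonneg.2 hxy)]
  exact exp_sub_exp_le_mul_sub x y

lemma abs_exp_sub_exp_sub_mul_le (x y : ℝ) :
    |exp y - exp x - exp x * (y - x)| ≤ exp (max x y) * (y - x) ^ 2 := by
  have hconv : exp x * (y - x) ≤ exp y - exp x := by
    nlinarith [add_one_le_exp (y - x), exp_pos x, show exp x * exp (y - x) = exp y by
      rw [← exp_add]; ring_nf]
  have hchord : exp y - exp x - exp x * (y - x) ≤ (exp y - exp x) * (y - x) := by
    nlinarith [exp_sub_exp_le_mul_sub x y]
  calc |exp y - exp x - exp x * (y - x)| ≤ |exp y - exp x| * |y - x| := by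
        rw [abs_of_nonneg (by linarith), ← abs_mul]; exact hchord.trans (le_abs_self _)
    _ ≤ exp (max x y) * |y - x| * |y - x| := by gcongr; exact abs_exp_sub_exp_le x y
    _ = exp (max x y) * (y - x) ^ 2 := by rw [mul_assoc, abs_mul_abs_self, sq]

end Exp

section Primitive

variable {f : ℝ → ℝ} {C : ℝ≥0}

lemma locallyIntegrable_of_abs_le (hf : Measurable f) (hC : ∀ s, |f s| ≤ C) :
    LocallyIntegrable f volume :=
  (locallyIntegrable_const (C : ℝ)).mono hf.aestronglyMeasurable
    (ae_of_all _ fun s => by simpa using hC s)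

lemma intervalIntegrable_of_abs_le (hf : Measurable f) (hC : ∀ s, |f s| ≤ C) (a b : ℝ) :
    IntervalIntegrable f volume a b :=
  (LocallyIntegrable.integrableOn_isCompact (locallyIntegrable_of_abs_le hf hC)
    isCompact_uIcc).intervalIntegrable

lemma lipschitzWith_integral (hf : Measurable f) (hC : ∀ s, |f s| ≤ C) (c : ℝ) :
    LipschitzWith C fun t => ∫ s in c..t, f s := by
  refine LipschitzWith.of_dist_le_mul fun x y => ?_
  rw [dist_eq_norm, intervalIntegral.integral_interval_sub_left
    (intervalIntegrable_of_abs_le hf hC c x) (intervalIntegrable_of_abs_le hf hC c y),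
    dist_comm, dist_eq_norm, Real.norm_eq_abs (y - x), abs_sub_comm]
  exact intervalIntegral.norm_integral_le_of_norm_le_const fun s _ =>
    (Real.norm_eq_abs _).trans_le (hC s)

lemma integral_exp_integral_mul (hf : Measurable f) (hC : ∀ s, |f s| ≤ C) (a b c : ℝ) :
    ∫ s in a..b, exp (∫ u in c..s, f u) * f s
      = exp (∫ u in c..b, f u) - exp (∫ u in c..a, f u) := by
  set F := fun t => ∫ u in c..t, f u
  have hF : LipschitzWith C F := lipschitzWith_integral hf hC c
  obtain ⟨B, hB⟩ := (isCompact_uIcc (a := a) (b := b)).exists_bound_of_continuousOn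
    hF.continuous.continuousOn
  have hG : LipschitzOnWith ((exp B).toNNReal * C) (fun t => exp (F t)) (uIcc a b) := by
    refine LipschitzOnWith.of_dist_le_mul fun x hx y hy => ?_
    rw [dist_comm, Real.dist_eq, Real.dist_eq, NNReal.coe_mul,
      Real.coe_toNNReal _ (exp_pos B).le, mul_assoc]
    refine (abs_exp_sub_exp_le (F x) (F y)).trans
      (mul_le_mul ?_ ?_ (abs_nonneg _) (exp_pos B).le)
    · exact exp_le_exp.2 (max_le ((le_abs_self _).trans (hB x hx))
        ((le_abs_self _).trans (hB y hy)))
    · simpa [Real.dist_eq, abs_sub_comm] using hF.dist_le_mul x y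
  rw [← hG.absolutelyContinuousOnInterval.integral_deriv_eq_sub]
  refine intervalIntegral.integral_congr_ae ?_
  filter_upwards [LocallyIntegrable.ae_hasDerivAt_integral (locallyIntegrable_of_abs_le hf hC)]
    with s hs _
  exact ((hs c).exp.deriv).symm

end Primitive

/-- With `F = Λ(ω)` and `T = τ(ω)`, `compensatedJump` and `survivalExp` are the paths of `M` and
`L`. -/
noncomputable def compensatedJump (F : ℝ → ℝ) (T t : ℝ) : ℝ :=
  (if T ≤ t then 1 else 0) - F (min t T)

noncomputable def survivalExp (F : ℝ → ℝ) (T t : ℝ) : ℝ :=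
  (if t < T then 1 else 0) * exp (F t)

section UniformGrid

/-- Steps of size `(b - a) / (n + 1)` from `a`; the grid reaches `b` at `k = n + 1`. -/
noncomputable def uniformGrid (a b : ℝ) (n k : ℕ) : ℝ := a + k * ((b - a) / (n + 1))

variable {a b : ℝ}

lemma uniformGrid_zero (n : ℕ) : uniformGrid a b n 0 = a := by
  simp [uniformGrid]

lemma uniformGrid_self (n : ℕ) : uniformGrid a b n (n + 1) = b := by
  simp only [uniformGrid]; push_cast; field_simp; ring

lemma uniformGrid_succ_sub (n k : ℕ) :
    uniformGrid a b n (k + 1) - uniformGrid a b n k = (b - a) / (n + 1) := by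
  simp only [uniformGrid]; push_cast; ring

lemma monotone_uniformGrid (hab : a ≤ b) (n : ℕ) : Monotone (uniformGrid a b n) :=
  fun k l hkl => by
    have : 0 ≤ (b - a) / (n + 1) := div_nonneg (sub_nonneg.2 hab) n.cast_add_one_pos.le
    simp only [uniformGrid]; gcongr

end UniformGrid

section Survival

variable {F : ℝ → ℝ} {T : ℝ}

lemma LipschitzWith.le_mul_abs {K : ℝ≥0} (hF : LipschitzWith K F) (hF0 : F 0 = 0) (s : ℝ) :
    F s ≤ K * |s| := by
  simpa [hF0, Real.dist_eq] using (le_abs_self _).trans (hF.dist_le_mul s 0)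

lemma survivalExp_eq_exp_min (t : ℝ) :
    survivalExp F T t = exp (F (min t T)) - exp (F T) * (if T ≤ t then 1 else 0) := by
  rcases lt_or_ge t T with h | h
  · simp [survivalExp, h, h.le, not_le.2 h]
  · simp [survivalExp, h, not_lt.2 h]

lemma survivalExp_eq_mul_exp_neg_compensatedJump (t : ℝ) :
    survivalExp F T t = (if t < T then 1 else 0) * exp (-compensatedJump F T t) := by
  rcases lt_or_ge t T with h | h
  · simp [survivalExp, compensatedJump, h, h.le, not_le.2 h]
  · simp [survivalExp, not_lt.2 h]

lemma abs_survivalExp_le {K : ℝ≥0} (hF : LipschitzWith K F) (hF0 : F 0 = 0) (t : ℝ) :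
    |survivalExp F T t| ≤ exp (K * |t|) := by
  unfold survivalExp
  split_ifs
  · simpa using hF.le_mul_abs hF0 t
  · simpa using (exp_pos _).le

lemma integral_mul_ite_le {g : ℝ → ℝ} {a : ℝ} (haT : a ≤ T) (t : ℝ) :
    ∫ s in a..t, g s * (if s ≤ T then 1 else 0) = ∫ s in a..min t T, g s := by
  rcases lt_or_ge t T with h | h
  · rw [min_eq_left h.le]
    refine intervalIntegral.integral_congr fun s hs => ?_
    have : s ≤ T := hs.2.trans (max_le haT h.le)
    simp [this]
  · rw [min_eq_right h, ← intervalIntegral.integral_indicator ⟨haT, h⟩]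
    refine intervalIntegral.integral_congr fun s _ => ?_
    by_cases hs : s ≤ T <;> simp [hs]

lemma survivalExp_integral_eq {f : ℝ → ℝ} {C : ℝ≥0} (hf : Measurable f) (hC : ∀ s, |f s| ≤ C)
    (hT : 0 ≤ T) (t : ℝ) :
    survivalExp (fun s => ∫ u in (0:ℝ)..s, f u) T t
      = 1 + (∫ s in (0:ℝ)..t, exp (∫ u in (0:ℝ)..s, f u) * f s * (if s ≤ T then 1 else 0))
        - exp (∫ u in (0:ℝ)..T, f u) * (if T ≤ t then 1 else 0) := by
  rw [survivalExp_eq_exp_min, integral_mul_ite_le hT, integral_exp_integral_mul hf hC,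
    intervalIntegral.integral_same, exp_zero]
  ring

lemma abs_survivalExp_sub_add_mul_le {K : ℝ≥0} (hF : LipschitzWith K F) {a b B : ℝ}
    (hab : a ≤ b) (hB : ∀ s ∈ Icc a b, F s ≤ B) :
    |survivalExp F T b - survivalExp F T a
        + survivalExp F T a * (compensatedJump F T b - compensatedJump F T a)|
      ≤ exp B * (K * (b - a))
        * (K * (b - a) + ((if T ≤ b then 1 else 0) - (if T ≤ a then 1 else 0))) := by
  have hlip : ∀ x y, |F y - F x| ≤ K * |y - x| := fun x y => by
    simpa [Real.dist_eq] using hF.dist_le_mul y x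
  have hδ : 0 ≤ K * (b - a) := mul_nonneg K.coe_nonneg (sub_nonneg.2 hab)
  rcases le_or_gt T a with hTa | haT
  · simp only [survivalExp, compensatedJump, not_lt.2 hTa, not_lt.2 (hTa.trans hab), hTa,
      hTa.trans hab, if_true, if_false, zero_mul, sub_self, add_zero, abs_zero]
    positivity
  rcases lt_or_ge b T with hbT | hTb
  · simp only [survivalExp, compensatedJump, if_pos haT, if_pos hbT, if_neg (not_le.2 haT),
      if_neg (not_le.2 hbT), min_eq_left haT.le, min_eq_left hbT.le, sub_self, add_zero, one_mul]
    calc |exp (F b) - exp (F a) + exp (F a) * (0 - F b - (0 - F a))|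
        = |exp (F b) - exp (F a) - exp (F a) * (F b - F a)| := by ring_nf
      _ ≤ exp (max (F a) (F b)) * (F b - F a) ^ 2 := abs_exp_sub_exp_sub_mul_le _ _
      _ ≤ exp B * (K * (b - a)) ^ 2 := by
        rw [← sq_abs]
        gcongr
        · exact max_le (hB a ⟨le_rfl, hab⟩) (hB b ⟨hab, le_rfl⟩)
        · exact (hlip a b).trans_eq (by rw [abs_of_nonneg (sub_nonneg.2 hab)])
      _ = exp B * (K * (b - a)) * (K * (b - a)) := by ring
  · simp only [survivalExp, compensatedJump, if_pos haT, if_neg (not_lt.2 hTb),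
      if_neg (not_le.2 haT), if_pos hTb, min_eq_left haT.le, min_eq_right hTb, one_mul, zero_mul]
    calc |0 - exp (F a) + exp (F a) * (1 - F T - (0 - F a))|
        = exp (F a) * |F T - F a| := by
          rw [show 0 - exp (F a) + exp (F a) * (1 - F T - (0 - F a)) = -(exp (F a) * (F T - F a))
            by ring, abs_neg, abs_mul, abs_of_pos (exp_pos _)]
      _ ≤ exp B * (K * (b - a)) := by
        gcongr
        · exact hB a ⟨le_rfl, hab⟩
        · refine (hlip a T).trans ?_
          rw [abs_of_pos (sub_pos.2 haT)]
          gcongr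
      _ ≤ exp B * (K * (b - a)) * (K * (b - a) + (1 - 0)) := by
        nlinarith [mul_nonneg (mul_nonneg (exp_pos B).le hδ) hδ]

lemma abs_survivalExp_sub_add_sum_le {K : ℝ≥0} (hF : LipschitzWith K F) {p : ℕ → ℝ}
    (hp : Monotone p) {N : ℕ} {δ B : ℝ} (hδ : 0 ≤ δ) (hpδ : ∀ k < N, p (k + 1) - p k ≤ δ)
    (hB : ∀ s ∈ Icc (p 0) (p N), F s ≤ B) :
    |survivalExp F T (p N) - survivalExp F T (p 0)
        + ∑ k ∈ Finset.range N, survivalExp F T (p k)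
            * (compensatedJump F T (p (k + 1)) - compensatedJump F T (p k))|
      ≤ exp B * K * δ * (K * (p N - p 0) + 1) := by
  set χ : ℝ → ℝ := fun t => if T ≤ t then 1 else 0
  have hχ : Monotone χ := fun s t hst => by
    simp only [χ]; split_ifs with h1 h2 <;> norm_num; exact h2 (h1.trans hst)
  have hχ1 : χ (p N) - χ (p 0) ≤ 1 := by
    simp only [χ]; split_ifs <;> norm_num
  rw [← Finset.sum_range_sub (fun k => survivalExp F T (p k)), ← Finset.sum_add_distrib]
  calc _ ≤ ∑ k ∈ Finset.range N, exp B * (K * (p (k + 1) - p k))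
          * (K * (p (k + 1) - p k) + (χ (p (k + 1)) - χ (p k))) := by
        refine (Finset.abs_sum_le_sum_abs _ _).trans (Finset.sum_le_sum fun k hk => ?_)
        have hk := Finset.mem_range.1 hk
        exact abs_survivalExp_sub_add_mul_le hF (hp k.le_succ) fun s hs =>
          hB s ⟨(hp (Nat.zero_le k)).trans hs.1, hs.2.trans (hp hk)⟩
    _ ≤ ∑ k ∈ Finset.range N, exp B * K * δ
          * (K * (p (k + 1) - p k) + (χ (p (k + 1)) - χ (p k))) := by
        refine Finset.sum_le_sum fun k hk => ?_
        have hd := sub_nonneg.2 (hp k.le_succ)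
        have hχk := sub_nonneg.2 (hχ (hp k.le_succ))
        refine mul_le_mul_of_nonneg_right ?_ (add_nonneg (mul_nonneg K.coe_nonneg hd) hχk)
        rw [mul_assoc (exp B)]
        gcongr
        exact hpδ k (Finset.mem_range.1 hk)
    _ = exp B * K * δ * (K * (p N - p 0) + (χ (p N) - χ (p 0))) := by
        rw [← Finset.mul_sum, Finset.sum_add_distrib, ← Finset.mul_sum,
          Finset.sum_range_sub (fun k => p k), Finset.sum_range_sub (fun k => χ (p k))]
    _ ≤ exp B * K * δ * (K * (p N - p 0) + 1) := by gcongr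

lemma abs_survivalExp_sub_add_sum_uniformGrid_le {K : ℝ≥0} (hF : LipschitzWith K F)
    (hF0 : F 0 = 0) {a b : ℝ} (hab : a ≤ b) (n : ℕ) :
    |survivalExp F T b - survivalExp F T a
        + ∑ k ∈ Finset.range (n + 1), survivalExp F T (uniformGrid a b n k)
            * (compensatedJump F T (uniformGrid a b n (k + 1))
              - compensatedJump F T (uniformGrid a b n k))|
      ≤ exp (K * max |a| |b|) * K * ((b - a) / (n + 1)) * (K * (b - a) + 1) := by
  have h := abs_survivalExp_sub_add_sum_le (T := T) hF (monotone_uniformGrid hab n)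
    (N := n + 1) (B := K * max |a| |b|) (div_nonneg (sub_nonneg.2 hab) n.cast_add_one_pos.le)
    (fun k _ => (uniformGrid_succ_sub n k).le) fun s hs => (hF.le_mul_abs hF0 s).trans <| by
      rw [uniformGrid_zero, uniformGrid_self] at hs
      gcongr
      exact abs_le_max_abs_abs hs.1 hs.2
  rwa [uniformGrid_zero, uniformGrid_self] at h

end Survival

section CondExp

variable {Ω ι : Type*} {m0 : MeasurableSpace Ω} {μ : Measure Ω}

lemma MeasureTheory.Martingale.integrable_mul_sub [Preorder ι] {𝒢 : Filtration ι m0} {M : ι → Ω → ℝ}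
    (hM : Martingale M 𝒢 μ) (s t : ι) {ξ : Ω → ℝ} {R : ℝ} (hξ : AEStronglyMeasurable ξ μ)
    (hξR : ∀ ω, |ξ ω| ≤ R) :
    Integrable (ξ * (M t - M s)) μ :=
  ((hM.integrable t).sub (hM.integrable s)).bdd_mul hξ
    (ae_of_all _ fun ω => (Real.norm_eq_abs _).trans_le (hξR ω))

lemma MeasureTheory.Martingale.condExp_mul_sub_ae_eq_zero [Preorder ι] [IsFiniteMeasure μ]
    {𝒢 : Filtration ι m0} {M : ι → Ω → ℝ} (hM : Martingale M 𝒢 μ) {i s t : ι} (his : i ≤ s)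
    (hst : s ≤ t) {ξ : Ω → ℝ} {R : ℝ} (hξ : StronglyMeasurable[𝒢 s] ξ) (hξR : ∀ ω, |ξ ω| ≤ R) :
    μ[ξ * (M t - M s) | 𝒢 i] =ᵐ[μ] 0 := by
  have hinc : μ[M t - M s | 𝒢 s] =ᵐ[μ] 0 := by
    filter_upwards [condExp_sub (hM.integrable t) (hM.integrable s) (𝒢 s), hM.condExp_ae_eq hst]
      with ω h1 h2
    rw [h1, Pi.sub_apply, h2, condExp_of_stronglyMeasurable (𝒢.le s) (hM.stronglyMeasurable s)
      (hM.integrable s), Pi.zero_apply, sub_self]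
  calc μ[ξ * (M t - M s) | 𝒢 i] =ᵐ[μ] μ[μ[ξ * (M t - M s) | 𝒢 s] | 𝒢 i] :=
        (condExp_condExp_of_le (𝒢.mono his) (𝒢.le s)).symm
    _ =ᵐ[μ] μ[0 | 𝒢 i] := by
        refine condExp_congr_ae ?_
        filter_upwards [condExp_mul_of_stronglyMeasurable_left hξ
          (hM.integrable_mul_sub s t (hξ.mono (𝒢.le s)).aestronglyMeasurable hξR)
          ((hM.integrable t).sub (hM.integrable s)), hinc] with ω h1 h2
        rw [h1, Pi.mul_apply, h2, Pi.zero_apply, mul_zero]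
    _ = 0 := condExp_zero

lemma MeasureTheory.Martingale.condExp_sum_mul_sub_ae_eq_zero [Preorder ι] [IsFiniteMeasure μ]
    {𝒢 : Filtration ι m0} {M : ι → Ω → ℝ} (hM : Martingale M 𝒢 μ) {ξ : ι → Ω → ℝ}
    (hξ : StronglyAdapted 𝒢 ξ) {R : ι → ℝ} (hξR : ∀ t ω, |ξ t ω| ≤ R t) {p : ℕ → ι}
    (hp : Monotone p) {i : ι} (hi : i ≤ p 0) (N : ℕ) :
    μ[∑ k ∈ Finset.range N, ξ (p k) * (M (p (k + 1)) - M (p k)) | 𝒢 i] =ᵐ[μ] 0 := by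
  have hterm : ∀ k, μ[ξ (p k) * (M (p (k + 1)) - M (p k)) | 𝒢 i] =ᵐ[μ] 0 := fun k =>
    hM.condExp_mul_sub_ae_eq_zero (hi.trans (hp k.zero_le)) (hp k.le_succ) (hξ _) (hξR _)
  refine (condExp_finsetSum (fun k _ => hM.integrable_mul_sub _ _
    ((hξ _).mono (𝒢.le _)).aestronglyMeasurable (hξR _)) (𝒢 i)).trans ?_
  filter_upwards [ae_all_iff.2 hterm] with ω h
  simp [Finset.sum_apply, h]

lemma condExp_ae_eq_zero_of_abs_add_le {m : MeasurableSpace Ω} {X : Ω → ℝ} {Y : ℕ → Ω → ℝ}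
    {ε : ℕ → ℝ} (hX : Integrable X μ) (hY : ∀ n, Integrable (Y n) μ)
    (hYm : ∀ n, μ[Y n | m] =ᵐ[μ] 0) (hXY : ∀ n ω, |X ω + Y n ω| ≤ ε n)
    (hε : Tendsto ε atTop (𝓝 0)) :
    μ[X | m] =ᵐ[μ] 0 := by
  have hbd : ∀ n, ∀ᵐ ω ∂μ, |μ[X | m] ω| ≤ ε n := fun n => by
    rw [show X = X + Y n - Y n by simp]
    filter_upwards [condExp_sub (hX.add (hY n)) (hY n) m, hYm n,
      ae_bdd_abs_condExp_of_ae_bdd_abs (m := m) (ae_of_all μ (hXY n))] with ω h1 h2 h3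
    rwa [h1, Pi.sub_apply, h2, Pi.zero_apply, sub_zero]
  filter_upwards [ae_all_iff.2 hbd] with ω hω
  exact abs_nonpos_iff.1 (ge_of_tendsto' hε hω)

end CondExp

section SurvivalMartingale

variable {Ω : Type*} {m0 : MeasurableSpace Ω} {μ : Measure Ω} [IsFiniteMeasure μ]
  {𝒢 : Filtration ℝ m0} {F : Ω → ℝ → ℝ} {τ : Ω → ℝ} {K : ℝ≥0}

lemma stronglyAdapted_survivalExp (hτ : IsStoppingTime 𝒢 fun ω => (τ ω : WithTop ℝ))
    (hM : StronglyAdapted 𝒢 fun t ω => compensatedJump (F ω) (τ ω) t) :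
    StronglyAdapted 𝒢 fun t ω => survivalExp (F ω) (τ ω) t := fun t => by
  -- `F` need not be adapted: before `τ` it is read off from the compensated jump process.
  have hτt : MeasurableSet[𝒢 t] {ω | t < τ ω} := by
    simpa only [compl_ofPred, not_le, WithTop.coe_le_coe] using (hτ t).compl
  simp_rw [survivalExp_eq_mul_exp_neg_compensatedJump]
  exact (Measurable.ite hτt measurable_const measurable_const).stronglyMeasurable.mul
    (continuous_exp.comp_stronglyMeasurable (hM t).neg)

theorem martingale_survivalExp (hF : ∀ ω, LipschitzWith K (F ω)) (hF0 : ∀ ω, F ω 0 = 0)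
    (hτ : IsStoppingTime 𝒢 fun ω => (τ ω : WithTop ℝ))
    (hM : Martingale (fun t ω => compensatedJump (F ω) (τ ω) t) 𝒢 μ) :
    Martingale (fun t ω => survivalExp (F ω) (τ ω) t) 𝒢 μ := by
  set L : ℝ → Ω → ℝ := fun t ω => survivalExp (F ω) (τ ω) t
  set M : ℝ → Ω → ℝ := fun t ω => compensatedJump (F ω) (τ ω) t
  have hadapt : StronglyAdapted 𝒢 L := stronglyAdapted_survivalExp hτ hM.stronglyAdapted
  have hbdd : ∀ t ω, |L t ω| ≤ exp (K * |t|) := fun t ω => abs_survivalExp_le (hF ω) (hF0 ω) t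
  have hint : ∀ t, Integrable (L t) μ := fun t =>
    .of_bound ((hadapt t).mono (𝒢.le t)).aestronglyMeasurable _
      (ae_of_all _ fun ω => (Real.norm_eq_abs _).trans_le (hbdd t ω))
  refine ⟨hadapt, fun i j hij => ?_⟩
  set Y : ℕ → Ω → ℝ := fun n => ∑ k ∈ Finset.range (n + 1),
    L (uniformGrid i j n k) * (M (uniformGrid i j n (k + 1)) - M (uniformGrid i j n k))
  have hY : ∀ n, Integrable (Y n) μ := fun n => integrable_finsetSum' _ fun k _ =>
    hM.integrable_mul_sub _ _ ((hadapt _).mono (𝒢.le _)).aestronglyMeasurable (hbdd _)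
  have hYm : ∀ n, μ[Y n | 𝒢 i] =ᵐ[μ] 0 := fun n =>
    hM.condExp_sum_mul_sub_ae_eq_zero hadapt hbdd (monotone_uniformGrid hij n)
      (uniformGrid_zero n).ge _
  have hXY : ∀ n ω, |(L j - L i) ω + Y n ω|
      ≤ exp (K * max |i| |j|) * K * ((j - i) / (n + 1)) * (K * (j - i) + 1) := fun n ω => by
    simpa [Y, L, M, Finset.sum_apply] using
      abs_survivalExp_sub_add_sum_uniformGrid_le (T := τ ω) (hF ω) (hF0 ω) hij n
  have hε : Tendsto (fun n : ℕ => exp (K * max |i| |j|) * K * ((j - i) / (n + 1))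
      * (K * (j - i) + 1)) atTop (𝓝 0) := by
    have h := (tendsto_one_div_add_atTop_nhds_zero_nat.const_mul
      (exp (K * max |i| |j|) * K * (j - i))).mul_const (K * (j - i) + 1)
    rw [mul_zero, zero_mul] at h
    exact h.congr fun n => by ring
  have hD := condExp_ae_eq_zero_of_abs_add_le ((hint j).sub (hint i)) hY hYm hXY hε
  filter_upwards [condExp_add ((hint j).sub (hint i)) (hint i) (𝒢 i), hD] with ω h1 h2
  rw [show L j = L j - L i + L i by simp, h1, Pi.add_apply, h2,
    condExp_of_stronglyMeasurable (𝒢.le i) (hadapt i) (hint i)]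
  simp

end SurvivalMartingale

lemma MeasureTheory.IsStronglyProgressive.measurable_path {Ω : Type*} {m0 : MeasurableSpace Ω}
    {𝒢 : Filtration ℝ m0} {u : ℝ → Ω → ℝ} (h : IsStronglyProgressive 𝒢 u) (ω : Ω) :
    Measurable fun s => u s ω := by
  have hn : ∀ n : ℕ, Measurable fun s : ℝ => u (min s n) ω := fun n =>
    (h n).measurable.comp (f := fun s => ((⟨min s n, min_le_right s n⟩ : Iic (n : ℝ)), ω))
      ((measurable_id.min measurable_const).subtype_mk.prodMk measurable_const)
  refine measurable_of_tendsto_metrizable' atTop hn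
    (tendsto_pi_nhds.2 fun s => tendsto_const_nhds.congr' ?_)
  filter_upwards [eventually_ge_atTop ⌈s⌉₊] with n hn
  rw [min_eq_left ((Nat.le_ceil s).trans (by exact_mod_cast hn))]

/-- If `M_t = 1_{t≥τ} − ∫₀^{t∧τ} λ_s ds` is a `𝔾`-martingale (i.e. `τ` has intensity `λ`),
then `L_t = 1_{τ>t} exp(∫₀^t λ_s ds)` is a `𝔾`-martingale and satisfies the pathwise
integral identity expressing `dL_t = −exp(∫₀^t λ_s ds) dM_t`. -/
theorem survival_exponential_martingale {Ω : Type*} {m0 : MeasurableSpace Ω}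
    (μ : Measure Ω) [IsProbabilityMeasure μ]
    (𝒢 : Filtration ℝ m0) (τ : Ω → ℝ) (hτ : IsStoppingTime 𝒢 (fun ω => (τ ω : WithTop ℝ))) (hτpos : ∀ ω, 0 ≤ τ ω)
    (lam : ℝ → Ω → ℝ) (hlam_nonneg : ∀ s ω, 0 ≤ lam s ω)
    (Clam : ℝ) (hlam_bdd : ∀ s ω, lam s ω ≤ Clam) (hlam_prog : ProgMeasurable 𝒢 lam)
    (hM : Martingale
      (fun t ω => Set.indicator {ω' | τ ω' ≤ t} (fun _ => (1 : ℝ)) ω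
        - ∫ s in (0:ℝ)..(min t (τ ω)), lam s ω) 𝒢 μ) :
    Martingale
      (fun t ω => Set.indicator {ω' | t < τ ω'} (fun _ => (1 : ℝ)) ω
        * Real.exp (∫ s in (0:ℝ)..t, lam s ω)) 𝒢 μ ∧
    ∀ t : ℝ, 0 ≤ t → ∀ ω,
      Set.indicator {ω' | t < τ ω'} (fun _ => (1 : ℝ)) ω
          * Real.exp (∫ s in (0:ℝ)..t, lam s ω)
        = 1 + (∫ s in (0:ℝ)..t,
              Real.exp (∫ u in (0:ℝ)..s, lam u ω) * lam s ω
                * Set.indicator {s' : ℝ | s' ≤ τ ω} (fun _ => (1 : ℝ)) s)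
          - Real.exp (∫ u in (0:ℝ)..(τ ω), lam u ω)
              * Set.indicator {ω' | τ ω' ≤ t} (fun _ => (1 : ℝ)) ω := by
  have hmeas : ∀ ω, Measurable fun s => lam s ω := hlam_prog.measurable_path
  have habs : ∀ ω s, |lam s ω| ≤ Clam.toNNReal := fun ω s => by
    rw [abs_of_nonneg (hlam_nonneg s ω)]
    exact (hlam_bdd s ω).trans (Real.le_coe_toNNReal Clam)
  set Λ : Ω → ℝ → ℝ := fun ω t => ∫ s in (0:ℝ)..t, lam s ω
  have hΛ : ∀ ω, LipschitzWith Clam.toNNReal (Λ ω) := fun ω =>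
    lipschitzWith_integral (hmeas ω) (habs ω) 0
  have hM' : Martingale (fun t ω => compensatedJump (Λ ω) (τ ω) t) 𝒢 μ := by
    simpa [compensatedJump, indicator_apply] using hM
  constructor
  · simpa [survivalExp, indicator_apply] using
      martingale_survivalExp hΛ (fun ω => intervalIntegral.integral_same) hτ hM'
  · intro t _ ω
    simpa [survivalExp, indicator_apply] using
      survivalExp_integral_eq (hmeas ω) (habs ω) (hτpos ω) t
end

section
/- In the BVE Cox framework with λ¹_t ≠ λ²_t a.e. (so the max is differentiable a.e.), the 𝔾 intensity of τ = τ¹∧τ² is λ_t = λ¹_t + λ²_t + γ·(λ¹_t ∨ λ²_t on the active branch), and in particular differs from the conditionally-independent intensity λ¹_t + λ²_t; more precisely d/dt[−log G(t,t)] = λ¹_t + λ²_t + γ·λ^{i*}_t where i* = argmax_i ∫₀^t λⁱ_s ds. -/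
/-!
Writing `I¹, I²` for the integrated intensities, `-log G = ∫₀^t (λ¹ + λ²) + γ · max (I¹, I²)`.
The maximum is differentiable wherever `I¹ ≠ I²`, with the derivative of the larger branch.
Since `I¹ - I²` has derivative `λ¹ - λ²`, its zeros at which `λ¹ ≠ λ²` are isolated, hence
countable, so `I¹ t ≠ I² t` holds for almost every `t`.
-/

open MeasureTheory Real Set Filter Topology

theorem countable_setOf_eq_and_deriv_ne {E : Type*} [NormedAddCommGroup E] [NormedSpace ℝ E]
    {f f' : ℝ → E} (hf : ∀ t, HasDerivAt f (f' t) t) (c : E) :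
    {t | f t = c ∧ f' t ≠ 0}.Countable := by
  refine (HereditarilyLindelofSpace.isLindelof _).countable_of_isDiscrete
    (isDiscrete_iff_nhdsNE.2 fun x hx => ?_)
  rw [inf_principal_eq_bot]
  filter_upwards [(hf x).eventually_ne hx.2 (c := c)] with t ht using fun h => ht h.1

theorem ae_ne_of_hasDerivAt {E : Type*} [NormedAddCommGroup E] [NormedSpace ℝ E]
    {μ : Measure ℝ} [NullSingletonClass μ] {f f' : ℝ → E} (hf : ∀ t, HasDerivAt f (f' t) t)
    (hf' : ∀ᵐ t ∂μ, f' t ≠ 0) (c : E) :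
    ∀ᵐ t ∂μ, f t ≠ c := by
  filter_upwards [hf', (countable_setOf_eq_and_deriv_ne hf c).ae_notMem μ] with t ht hnot
  exact fun h => hnot ⟨h, ht⟩

theorem HasDerivAt.max_of_ne {f g : ℝ → ℝ} {f' g' x : ℝ} (hf : HasDerivAt f f' x)
    (hg : HasDerivAt g g' x) (hne : f x ≠ g x) :
    HasDerivAt (fun y => max (f y) (g y)) (if g x ≤ f x then f' else g') x := by
  rcases hne.lt_or_gt with hlt | hlt
  · rw [if_neg hlt.not_ge]
    refine hg.congr_of_eventuallyEq ?_
    filter_upwards [hf.continuousAt.eventually_lt hg.continuousAt hlt] with y hy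
    exact max_eq_right hy.le
  · rw [if_pos hlt.le]
    refine hf.congr_of_eventuallyEq ?_
    filter_upwards [hg.continuousAt.eventually_lt hf.continuousAt hlt] with y hy
    exact max_eq_left hy.le

theorem bve_cox_intensity_general {Ω : Type*}
    (lam1 lam2 : ℝ → Ω → ℝ)
    (hlam1_cont : ∀ ω, Continuous fun s => lam1 s ω)
    (hlam2_cont : ∀ ω, Continuous fun s => lam2 s ω)
    (hne : ∀ ω, ∀ᵐ t ∂(MeasureTheory.volume : Measure ℝ), lam1 t ω ≠ lam2 t ω)
    (γ : ℝ)
    (G : ℝ → Ω → ℝ)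
    (hG : ∀ t ω, G t ω
      = Real.exp (-(∫ s in (0:ℝ)..t, (lam1 s ω + lam2 s ω))
          - γ * max (∫ s in (0:ℝ)..t, lam1 s ω) (∫ s in (0:ℝ)..t, lam2 s ω))) :
    ∀ ω, ∀ᵐ t ∂((MeasureTheory.volume : Measure ℝ).restrict (Set.Ioi (0:ℝ))),
      HasDerivAt (fun u => -Real.log (G u ω))
        (lam1 t ω + lam2 t ω
          + γ * (if (∫ s in (0:ℝ)..t, lam2 s ω) ≤ (∫ s in (0:ℝ)..t, lam1 s ω)
                  then lam1 t ω else lam2 t ω)) t ∧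
      (γ * (if (∫ s in (0:ℝ)..t, lam2 s ω) ≤ (∫ s in (0:ℝ)..t, lam1 s ω)
              then lam1 t ω else lam2 t ω) ≠ 0 →
        lam1 t ω + lam2 t ω
          + γ * (if (∫ s in (0:ℝ)..t, lam2 s ω) ≤ (∫ s in (0:ℝ)..t, lam1 s ω)
                  then lam1 t ω else lam2 t ω) ≠ lam1 t ω + lam2 t ω) := by
  intro ω
  have hI1 := fun t => ((hlam1_cont ω).integral_hasStrictDerivAt 0 t).hasDerivAt
  have hI2 := fun t => ((hlam2_cont ω).integral_hasStrictDerivAt 0 t).hasDerivAt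
  have hsum := fun t =>
    (((hlam1_cont ω).add (hlam2_cont ω)).integral_hasStrictDerivAt 0 t).hasDerivAt
  have hlog : (fun u => -Real.log (G u ω)) = fun u => (∫ s in (0:ℝ)..u, (lam1 s ω + lam2 s ω))
      + γ * max (∫ s in (0:ℝ)..u, lam1 s ω) (∫ s in (0:ℝ)..u, lam2 s ω) := by
    ext u
    rw [hG, Real.log_exp]
    ring
  have hI_ne : ∀ᵐ t ∂volume,
      (∫ s in (0:ℝ)..t, lam1 s ω) - (∫ s in (0:ℝ)..t, lam2 s ω) ≠ 0 :=
    ae_ne_of_hasDerivAt (fun t => (hI1 t).sub (hI2 t))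
      (by simpa only [sub_ne_zero] using hne ω) 0
  filter_upwards [ae_restrict_of_ae hI_ne] with t ht
  refine ⟨?_, fun h => by simpa only [ne_eq, add_eq_left] using h⟩
  rw [hlog]
  exact (hsum t).add (((hI1 t).max_of_ne (hI2 t) (sub_ne_zero.1 ht)).const_mul γ)

/-- In the BVE Cox framework with `λ¹_t ≠ λ²_t` a.e., the `𝔾` intensity of `τ = τ¹∧τ²` is
`λ_t = λ¹_t + λ²_t + γ·λ^{i*}_t` where `i* = argmax_i ∫₀^t λⁱ`:
`d/dt[−log G(t,t)] = λ¹_t + λ²_t + γ·λ^{i*}_t`, which differs from the conditionally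
independent intensity `λ¹_t + λ²_t`. -/
theorem bve_cox_intensity {Ω : Type*} {m0 : MeasurableSpace Ω} (μ : Measure Ω)
    [IsProbabilityMeasure μ]
    (F : Filtration ℝ m0)
    (lam1 lam2 : ℝ → Ω → ℝ)
    (hlam1_nonneg : ∀ s ω, 0 ≤ lam1 s ω) (hlam2_nonneg : ∀ s ω, 0 ≤ lam2 s ω)
    (C : ℝ) (hlam1_bdd : ∀ s ω, lam1 s ω ≤ C) (hlam2_bdd : ∀ s ω, lam2 s ω ≤ C)
    (hlam1_cont : ∀ ω, Continuous fun s => lam1 s ω)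
    (hlam2_cont : ∀ ω, Continuous fun s => lam2 s ω)
    (hlam1_prog : ProgMeasurable F lam1) (hlam2_prog : ProgMeasurable F lam2)
    (hne : ∀ ω, ∀ᵐ t ∂(MeasureTheory.volume : Measure ℝ), lam1 t ω ≠ lam2 t ω)
    (γ : ℝ) (hγ : 0 < γ)
    (G : ℝ → Ω → ℝ)
    (hG : ∀ t ω, G t ω
      = Real.exp (-(∫ s in (0:ℝ)..t, (lam1 s ω + lam2 s ω))
          - γ * max (∫ s in (0:ℝ)..t, lam1 s ω) (∫ s in (0:ℝ)..t, lam2 s ω))) :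
    ∀ ω, ∀ᵐ t ∂((MeasureTheory.volume : Measure ℝ).restrict (Set.Ioi (0:ℝ))),
      HasDerivAt (fun u => -Real.log (G u ω))
        (lam1 t ω + lam2 t ω
          + γ * (if (∫ s in (0:ℝ)..t, lam2 s ω) ≤ (∫ s in (0:ℝ)..t, lam1 s ω)
                  then lam1 t ω else lam2 t ω)) t ∧
      (γ * (if (∫ s in (0:ℝ)..t, lam2 s ω) ≤ (∫ s in (0:ℝ)..t, lam1 s ω)
              then lam1 t ω else lam2 t ω) ≠ 0 →
        lam1 t ω + lam2 t ω
          + γ * (if (∫ s in (0:ℝ)..t, lam2 s ω) ≤ (∫ s in (0:ℝ)..t, lam1 s ω)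
                  then lam1 t ω else lam2 t ω) ≠ lam1 t ω + lam2 t ω) :=
  bve_cox_intensity_general lam1 lam2 hlam1_cont hlam2_cont hne γ G hG
end
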